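/- arXiv:2411.07046 — 3 statements merged into one kernel-verified Lean document; each statement's English description precedes it below -/
import Mathlib

section
/- For any self-adjoint operator D on a Hilbert space with 0 not in its spectrum, the spectral projection onto the positive part satisfies 1_{(0,∞)}(D) = 1/2 + (1/2π) ∫_{-∞}^{∞} (D + iz)^{-1} dz, where the integral is understood as a principal value/strong limit. -/
open MeasureTheory Filter Topology Set Real
open Complex (I)

/-! Both sides are functions of `D` in the continuous functional calculus. For real `t ≠ 0`,
`∫_{-R}^{R} (t + iz)⁻¹ dz = 2 arctan (R / t)`, and `1/2 + arctan (R / t) / π` differs from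
`1_{(0,∞)}(t)` by `arctan (|t| / R) / π ≤ |t| / (π R)`. As `σ(D)` is bounded and avoids `0`, the
convergence is uniform on `σ(D)`, and the functional calculus turns uniform convergence on the
spectrum into norm convergence of the operators, hence strong convergence. -/

lemma ofReal_add_ofReal_mul_I_ne_zero {r : ℝ} (hr : r ≠ 0) (z : ℝ) : (r : ℂ) + z * I ≠ 0 := by
  intro h
  exact hr (by simpa using congrArg Complex.re h)

lemma hasDerivAt_arctan_div_sub_log (r z : ℝ) (hr : r ≠ 0) :
    HasDerivAt (fun z : ℝ => (arctan (z / r) : ℂ) - I / 2 * (log (r ^ 2 + z ^ 2) : ℂ))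
      ((r : ℂ) + z * I)⁻¹ z := by
  have hpos : 0 < r ^ 2 + z ^ 2 := by positivity
  have harctan := ((hasDerivAt_arctan (z / r)).comp z ((hasDerivAt_id z).div_const r)).ofReal_comp
  have hlog := (((hasDerivAt_pow 2 z).const_add (r ^ 2)).log hpos.ne').ofReal_comp
  refine (harctan.sub (hlog.const_mul (I / 2))).congr_deriv ?_
  have hsq : (r : ℂ) ^ 2 + (z : ℂ) ^ 2 ≠ 0 := by exact_mod_cast hpos.ne'
  have hrc : (r : ℂ) ≠ 0 := by exact_mod_cast hr
  have hne : (r : ℂ) + z * I ≠ 0 := ofReal_add_ofReal_mul_I_ne_zero hr z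
  push_cast
  field_simp
  ring_nf
  simp only [Complex.I_sq]
  ring

lemma integral_inv_ofReal_add_ofReal_mul_I {r : ℝ} (hr : r ≠ 0) (R : ℝ) :
    ∫ z in (-R)..R, ((r : ℂ) + z * I)⁻¹ = (2 * arctan (R / r) : ℝ) := by
  have hcont : Continuous fun z : ℝ => ((r : ℂ) + z * I)⁻¹ :=
    (by fun_prop : Continuous fun z : ℝ => (r : ℂ) + z * I).inv₀
      (ofReal_add_ofReal_mul_I_ne_zero hr)
  rw [intervalIntegral.integral_eq_sub_of_hasDerivAt
    (fun z _ => hasDerivAt_arctan_div_sub_log r z hr) (hcont.intervalIntegrable _ _)]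
  simp only [neg_div, arctan_neg, neg_sq]
  push_cast
  ring

lemma arctan_le_self {x : ℝ} (hx : 0 ≤ x) : arctan x ≤ x :=
  calc arctan x ≤ tan (arctan x) := le_tan (arctan_nonneg.2 hx) (arctan_lt_pi_div_two x)
    _ = x := tan_arctan x

lemma abs_half_add_arctan_div_pi_sub_indicator {r R : ℝ} (hr : r ≠ 0) (hR : 0 < R) :
    |1 / 2 + arctan (R / r) / π - if 0 < r then 1 else 0| = arctan (|r| / R) / π := by
  have hcompl : ∀ s, 0 < s → arctan (R / s) = π / 2 - arctan (s / R) := fun s hs => by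
    rw [← arctan_inv_of_pos (by positivity), inv_div]
  rcases hr.lt_or_gt with hneg | hpos
  · have hA := arctan_nonneg.2 (div_nonneg (neg_nonneg.2 hneg.le) hR.le)
    rw [if_neg hneg.not_gt, abs_of_neg hneg, show R / r = -(R / -r) by ring, arctan_neg,
      hcompl _ (neg_pos.2 hneg), show 1 / 2 + -(π / 2 - arctan (-r / R)) / π - 0
        = arctan (-r / R) / π by field_simp; ring]
    exact abs_of_nonneg (by positivity)
  · have hA := arctan_nonneg.2 (by positivity : 0 ≤ r / R)
    rw [if_pos hpos, abs_of_pos hpos, hcompl _ hpos, show 1 / 2 + (π / 2 - arctan (r / R)) / π - 1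
        = -(arctan (r / R) / π) by field_simp; ring, abs_neg]
    exact abs_of_nonneg (by positivity)

lemma abs_half_add_arctan_div_pi_sub_indicator_le {r R : ℝ} (hr : r ≠ 0) (hR : 0 < R) :
    |1 / 2 + arctan (R / r) / π - if 0 < r then 1 else 0| ≤ |r| / (π * R) := by
  rw [abs_half_add_arctan_div_pi_sub_indicator hr hR, ← div_div, div_right_comm]
  gcongr
  exact arctan_le_self (by positivity)

lemma continuousOn_arctan_div {s : Set ℝ} (h0 : 0 ∉ s) (R : ℝ) :
    ContinuousOn (fun t => arctan (R / t)) s :=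
  continuous_arctan.comp_continuousOn
    (continuousOn_const.div continuousOn_id fun _ ht => ne_of_mem_of_not_mem ht h0)

lemma tendstoUniformlyOn_half_add_arctan_div_pi {s : Set ℝ} (h0 : 0 ∉ s)
    (hs : Bornology.IsBounded s) :
    TendstoUniformlyOn (fun R t => 1 / 2 + arctan (R / t) / π)
      (fun t => if 0 < t then 1 else 0) atTop s := by
  obtain ⟨M, hM⟩ := hs.exists_norm_le
  have hbound : Tendsto (fun R => M / (π * R)) atTop (𝓝 0) :=
    tendsto_const_nhds.div_atTop (tendsto_id.const_mul_atTop pi_pos)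
  rw [Metric.tendstoUniformlyOn_iff]
  intro ε hε
  filter_upwards [hbound.eventually (gt_mem_nhds hε), eventually_gt_atTop 0] with R hRε hR t ht
  rw [dist_comm, Real.dist_eq]
  calc _ ≤ |t| / (π * R) :=
        abs_half_add_arctan_div_pi_sub_indicator_le (ne_of_mem_of_not_mem ht h0) hR
    _ ≤ M / (π * R) := by gcongr; exact hM t ht
    _ < ε := hRε

section FunctionalCalculus

variable {𝕜 A : Type*} {p : A → Prop} [RCLike 𝕜] [NormedRing A] [StarRing A] [NormedAlgebra 𝕜 A]
  [ContinuousFunctionalCalculus 𝕜 A p]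

lemma ring_inverse_add_smul_one_eq_cfc (a : A) {c : 𝕜} (hc : ∀ t ∈ spectrum 𝕜 a, t + c ≠ 0)
    (ha : p a := by cfc_tac) :
    Ring.inverse (a + c • 1) = cfc (fun t => (t + c)⁻¹) a := by
  rw [cfc_inv (fun t => t + c) a hc, cfc_add_const c (fun t => t) a, cfc_id' 𝕜 a,
    Algebra.algebraMap_eq_smul_one]

lemma cfc_intervalIntegral [NormedSpace ℝ A] [CompleteSpace A] (f : ℝ → 𝕜 → 𝕜) (a : A)
    (hf : ContinuousOn (Function.uncurry f) (univ ×ˢ spectrum 𝕜 a)) (α β : ℝ)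
    (ha : p a := by cfc_tac) :
    cfc (fun t => ∫ x in α..β, f x t) a = ∫ x in α..β, cfc (f x) a := by
  wlog hαβ : α ≤ β generalizing α β
  · simp only [intervalIntegral.integral_symm β α]
    rw [cfc_neg, this β α (le_of_not_ge hαβ)]
  have hf' : ContinuousOn (Function.uncurry f) (Icc α β ×ˢ spectrum 𝕜 a) :=
    hf.mono (prod_mono (subset_univ _) subset_rfl)
  obtain ⟨C, hC⟩ := (isCompact_Icc.prod (spectrum.isCompact a)).exists_bound_of_continuousOn hf'
  simp only [intervalIntegral.integral_of_le hαβ]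
  refine cfc_setIntegral measurableSet_Ioc f (fun _ => C) a
    (hf'.mono (prod_mono Ioc_subset_Icc_self subset_rfl)) ?_ (hasFiniteIntegral_const C)
  exact ae_restrict_of_forall_mem measurableSet_Ioc fun x hx t ht =>
    hC (x, t) ⟨Ioc_subset_Icc_self hx, ht⟩

end FunctionalCalculus

namespace IsSelfAdjoint

variable {A : Type*} [CStarAlgebra A] {a : A}

lemma re_ne_zero_of_mem_spectrum (ha : IsSelfAdjoint a) (ha' : IsUnit a) {t : ℂ}
    (ht : t ∈ spectrum ℂ a) : t.re ≠ 0 := by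
  intro h
  rw [ha.mem_spectrum_eq_re ht, h, Complex.ofReal_zero] at ht
  exact (spectrum.zero_notMem_iff ℂ).2 ha' ht

lemma add_ofReal_mul_I_ne_zero (ha : IsSelfAdjoint a) (ha' : IsUnit a) {t : ℂ}
    (ht : t ∈ spectrum ℂ a) (z : ℝ) : t + z * I ≠ 0 := by
  rw [ha.mem_spectrum_eq_re ht]
  exact ofReal_add_ofReal_mul_I_ne_zero (ha.re_ne_zero_of_mem_spectrum ha' ht) z

lemma continuous_ring_inverse_add_ofReal_mul_I_smul_one (ha : IsSelfAdjoint a) (ha' : IsUnit a) :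
    Continuous fun z : ℝ => Ring.inverse (a + ((z : ℂ) * I) • 1) := by
  refine continuous_iff_continuousAt.2 fun z => ?_
  have hunit : IsUnit (a + ((z : ℂ) * I) • 1) := by
    have := spectrum.notMem_iff.1 fun h => ha.add_ofReal_mul_I_ne_zero ha' h z (neg_add_cancel _)
    simpa [Algebra.algebraMap_eq_smul_one, neg_smul, ← neg_add', add_comm] using this.neg
  exact (NormedRing.inverse_continuousAt hunit.unit).comp_of_eq (by fun_prop) hunit.unit_spec

lemma intervalIntegral_ring_inverse_add_ofReal_mul_I_smul_one (ha : IsSelfAdjoint a)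
    (ha' : IsUnit a) (R : ℝ) :
    ∫ z in (-R)..R, Ring.inverse (a + ((z : ℂ) * I) • 1) =
      cfc (fun t : ℝ => 2 * arctan (R / t)) a := by
  have hne {t : ℂ} (ht : t ∈ spectrum ℂ a) (z : ℝ) := ha.add_ofReal_mul_I_ne_zero ha' ht z
  calc ∫ z in (-R)..R, Ring.inverse (a + ((z : ℂ) * I) • 1)
      = ∫ z in (-R)..R, cfc (fun t => (t + z * I)⁻¹) a :=
        intervalIntegral.integral_congr fun z _ =>
          ring_inverse_add_smul_one_eq_cfc a fun t ht => hne ht z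
    _ = cfc (fun t => ∫ z in (-R)..R, (t + z * I)⁻¹) a :=
        (cfc_intervalIntegral _ a ((by fun_prop : Continuous fun p : ℝ × ℂ => p.2 + p.1 * I)
          |>.continuousOn.inv₀ fun p hp => hne hp.2 p.1) _ _).symm
    _ = cfc (fun t : ℂ => ((2 * arctan (R / t.re) : ℝ) : ℂ)) a := cfc_congr fun t ht => by
        rw [← integral_inv_ofReal_add_ofReal_mul_I (ha.re_ne_zero_of_mem_spectrum ha' ht),
          ← ha.mem_spectrum_eq_re ht]
    _ = cfc (fun t : ℝ => 2 * arctan (R / t)) a :=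
        (cfc_real_eq_complex (fun t : ℝ => 2 * arctan (R / t)) ha).symm

lemma half_add_intervalIntegral_ring_inverse_eq_cfc (ha : IsSelfAdjoint a) (ha' : IsUnit a)
    (R : ℝ) :
    (1 / 2 : ℂ) • (1 : A) +
        (1 / (2 * π) : ℂ) • ∫ z in (-R)..R, Ring.inverse (a + ((z : ℂ) * I) • 1) =
      cfc (fun t : ℝ => 1 / 2 + arctan (R / t) / π) a := by
  have h0 : (0 : ℝ) ∉ spectrum ℝ a := (spectrum.zero_notMem_iff ℝ).2 ha'
  have hcont : ContinuousOn (fun t : ℝ => 2 * arctan (R / t)) (spectrum ℝ a) :=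
    continuousOn_const.mul (continuousOn_arctan_div h0 R)
  calc (1 / 2 : ℂ) • (1 : A) +
        (1 / (2 * π) : ℂ) • ∫ z in (-R)..R, Ring.inverse (a + ((z : ℂ) * I) • 1)
      = algebraMap ℝ A (1 / 2) + (1 / (2 * π)) • cfc (fun t : ℝ => 2 * arctan (R / t)) a := by
        rw [ha.intervalIntegral_ring_inverse_add_ofReal_mul_I_smul_one ha' R,
          Algebra.algebraMap_eq_smul_one, RCLike.real_smul_eq_coe_smul (K := ℂ),
          RCLike.real_smul_eq_coe_smul (K := ℂ)]
        push_cast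
        rfl
    _ = cfc (fun t : ℝ => 1 / 2 + 1 / (2 * π) * (2 * arctan (R / t))) a := by
        rw [cfc_const_add _ (fun t => 1 / (2 * π) * (2 * arctan (R / t))) a
          (continuousOn_const.mul hcont), cfc_const_mul _ _ a hcont]
    _ = cfc (fun t : ℝ => 1 / 2 + arctan (R / t) / π) a := by
        congr! 3 with t
        field_simp

theorem tendsto_half_add_intervalIntegral_ring_inverse (ha : IsSelfAdjoint a) (ha' : IsUnit a) :
    Tendsto (fun R : ℝ => (1 / 2 : ℂ) • (1 : A) +
        (1 / (2 * π) : ℂ) • ∫ z in (-R)..R, Ring.inverse (a + ((z : ℂ) * I) • 1))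
      atTop (𝓝 (cfc (fun t : ℝ => if 0 < t then (1 : ℝ) else 0) a)) := by
  have h0 : (0 : ℝ) ∉ spectrum ℝ a := (spectrum.zero_notMem_iff ℝ).2 ha'
  simp only [ha.half_add_intervalIntegral_ring_inverse_eq_cfc ha']
  refine tendsto_cfc_fun (tendstoUniformlyOn_half_add_arctan_div_pi h0 (spectrum.isBounded a))
    (.of_forall fun R => ?_)
  exact continuousOn_const.add ((continuousOn_arctan_div h0 R).div_const π)

end IsSelfAdjoint

/-- Cauchy integral representation of the positive spectral projection: for a
self-adjoint operator `D` with `0 ∉ σ(D)`,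
`1_{(0,∞)}(D) = 1/2 + (1/2π) ∫_{-∞}^{∞} (D + iz)⁻¹ dz`,
where the integral converges strongly as a symmetric principal value. -/
theorem cauchy_representation_positive_spectral_projection
    {H : Type*} [NormedAddCommGroup H] [InnerProductSpace ℂ H] [CompleteSpace H]
    (D : H →L[ℂ] H) (hD : IsSelfAdjoint D) (h0 : (0 : ℂ) ∉ spectrum ℂ D) (u : H) :
    Tendsto
      (fun R : ℝ => (1 / 2 : ℂ) • u +
        (1 / (2 * Real.pi) : ℂ) •
          ∫ z in (-R)..R, (Ring.inverse (D + ((z : ℂ) * Complex.I) • 1)) u)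
      atTop
      (𝓝 ((cfc (fun t : ℝ => if 0 < t then (1 : ℝ) else 0) D) u)) := by
  have hD' : IsUnit D := (spectrum.zero_notMem_iff ℂ).1 h0
  have hu := ((ContinuousLinearMap.apply ℂ H u).continuous.tendsto _).comp
    (hD.tendsto_half_add_intervalIntegral_ring_inverse hD')
  refine hu.congr fun R => ?_
  simp [ContinuousLinearMap.intervalIntegral_apply
    ((hD.continuous_ring_inverse_add_ofReal_mul_I_smul_one hD').intervalIntegrable _ _)]
end

section
/- If D is a self-adjoint operator with 0 ∉ σ(D), then for any vector u in the Hilbert space, ∫_{-∞}^{∞} ‖ |D|^{1/2} (D + iz)^{-1} u ‖² dz = π ‖u‖². -/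
/-!
By the functional calculus, `|D|^{1/2} (D + iz)⁻¹` is the function `t ↦ √|t| / (t + iz)` of `D`,
so `‖|D|^{1/2} (D + iz)⁻¹ u‖² = ⟪u, k_z(D) u⟫` with `k_z(t) = |t| / (t² + z²)`. Since the spectrum
is compact and avoids `0`, `k_z` is dominated on it by an integrable function of `z`, so the
`z`-integral passes inside the functional calculus, where `∫ k_z(t) dz = π` for every `t ≠ 0`.
-/

open MeasureTheory Complex Real
open scoped InnerProductSpace

lemma inv_sq_add_sq_eq {c : ℝ} (hc : c ≠ 0) (z : ℝ) :
    (c ^ 2 + z ^ 2)⁻¹ = (c ^ 2)⁻¹ * (1 + (z / c) ^ 2)⁻¹ := by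
  field_simp

lemma integrable_inv_sq_add_sq {c : ℝ} (hc : c ≠ 0) :
    Integrable fun z : ℝ => (c ^ 2 + z ^ 2)⁻¹ := by
  simp_rw [inv_sq_add_sq_eq hc]
  exact (integrable_inv_one_add_sq.comp_div hc).const_mul _

lemma integral_univ_inv_sq_add_sq {c : ℝ} (hc : c ≠ 0) :
    ∫ z : ℝ, (c ^ 2 + z ^ 2)⁻¹ = π / |c| := by
  simp_rw [inv_sq_add_sq_eq hc]
  rw [integral_const_mul, Measure.integral_comp_div (fun x : ℝ => (1 + x ^ 2)⁻¹),
    integral_univ_inv_one_add_sq, smul_eq_mul, ← sq_abs]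
  field_simp

lemma integral_abs_div_sq_add_sq {r : ℝ} (hr : r ≠ 0) :
    ∫ z : ℝ, |r| / (r ^ 2 + z ^ 2) = π := by
  simp_rw [div_eq_mul_inv]
  rw [integral_const_mul, integral_univ_inv_sq_add_sq hr]
  field_simp

lemma abs_div_sq_add_sq_le {t ε R : ℝ} (z : ℝ) (hε0 : 0 < ε) (hε : ε ≤ |t|) (hR : |t| ≤ R) :
    |t| / (t ^ 2 + z ^ 2) ≤ R * (ε ^ 2 + z ^ 2)⁻¹ := by
  rw [← div_eq_mul_inv, ← sq_abs t]
  gcongr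
  exact (abs_nonneg t).trans hR

lemma IsCompact.exists_pos_le_abs_le {s : Set ℝ} (hs : IsCompact s) (h0 : 0 ∉ s) :
    ∃ ε > 0, ∃ R, ∀ t ∈ s, ε ≤ |t| ∧ |t| ≤ R := by
  obtain ⟨ε, hε, hball⟩ := Metric.mem_nhds_iff.mp (hs.isClosed.isOpen_compl.mem_nhds h0)
  obtain ⟨R, hR⟩ := hs.isBounded.exists_norm_le
  exact ⟨ε, hε, R, fun t ht => ⟨not_lt.mp fun h => hball (by simpa using h) ht, hR t ht⟩⟩

lemma continuousOn_uncurry_abs_div_sq_add_sq {s : Set ℝ} (h0 : 0 ∉ s) :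
    ContinuousOn (Function.uncurry fun z t : ℝ => |t| / (t ^ 2 + z ^ 2)) (Set.univ ×ˢ s) := by
  refine ContinuousOn.div (by fun_prop) (by fun_prop) fun p hp => ?_
  have : p.2 ≠ 0 := fun h => h0 (h ▸ hp.2)
  positivity

lemma IsCompact.exists_integrable_bound_abs_div_sq_add_sq {s : Set ℝ} (hs : IsCompact s)
    (h0 : 0 ∉ s) : ∃ bound : ℝ → ℝ, Integrable bound ∧
      ∀ z, ∀ t ∈ s, ‖|t| / (t ^ 2 + z ^ 2)‖ ≤ bound z := by
  obtain ⟨ε, hε, R, hs⟩ := hs.exists_pos_le_abs_le h0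
  refine ⟨fun z => R * (ε ^ 2 + z ^ 2)⁻¹, (integrable_inv_sq_add_sq hε.ne').const_mul R,
    fun z t ht => ?_⟩
  rw [Real.norm_of_nonneg (by positivity)]
  exact abs_div_sq_add_sq_le z hε (hs t ht).1 (hs t ht).2

lemma star_mul_self_sqrt_abs_mul_inv (r z : ℝ) :
    star ((√|r| : ℂ) * (r + z * I)⁻¹) * ((√|r| : ℂ) * (r + z * I)⁻¹)
      = ((|r| / (r ^ 2 + z ^ 2) : ℝ) : ℂ) := by
  rw [Complex.star_def, conj_mul', norm_mul, norm_inv, norm_add_mul_I, Complex.norm_real,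
    Real.norm_of_nonneg (Real.sqrt_nonneg _), ← ofReal_pow, mul_pow, inv_pow,
    Real.sq_sqrt (abs_nonneg r), Real.sq_sqrt (by positivity), div_eq_mul_inv]

section CStarAlgebra

variable {A : Type*} [CStarAlgebra A]

lemma cfc_inv_add_const (a : A) (c : ℂ) (hc : ∀ x ∈ spectrum ℂ a, x + c ≠ 0)
    (ha : IsStarNormal a := by cfc_tac) :
    cfc (fun x => (x + c)⁻¹) a = Ring.inverse (a + c • 1) := by
  rw [cfc_inv _ a hc, cfc_add_const c (fun x => x) a, cfc_id' ℂ a,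
    Algebra.algebraMap_eq_smul_one]

variable {a : A}

lemma IsSelfAdjoint.integrable_cfc_abs_div_sq_add_sq (ha : IsSelfAdjoint a)
    (h0 : 0 ∉ spectrum ℝ a) :
    Integrable fun z : ℝ => cfc (fun t : ℝ => |t| / (t ^ 2 + z ^ 2)) a := by
  obtain ⟨bound, hbound, hle⟩ :=
    (spectrum.isCompact a).exists_integrable_bound_abs_div_sq_add_sq h0
  exact integrable_cfc _ bound a (continuousOn_uncurry_abs_div_sq_add_sq h0)
    (.of_forall hle) hbound.hasFiniteIntegral

lemma IsSelfAdjoint.integral_cfc_abs_div_sq_add_sq (ha : IsSelfAdjoint a)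
    (h0 : 0 ∉ spectrum ℝ a) :
    ∫ z : ℝ, cfc (fun t : ℝ => |t| / (t ^ 2 + z ^ 2)) a = algebraMap ℝ A π := by
  obtain ⟨bound, hbound, hle⟩ :=
    (spectrum.isCompact a).exists_integrable_bound_abs_div_sq_add_sq h0
  rw [← cfc_integral _ bound a (continuousOn_uncurry_abs_div_sq_add_sq h0)
    (.of_forall hle) hbound.hasFiniteIntegral, ← cfc_const π a]
  refine cfc_congr fun t ht => integral_abs_div_sq_add_sq ?_
  rintro rfl
  exact h0 ht

lemma IsSelfAdjoint.star_mul_self_cfc_sqrt_abs_mul_inverse (ha : IsSelfAdjoint a)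
    (h0 : 0 ∉ spectrum ℝ a) (z : ℝ) :
    star (cfc (fun t : ℝ => √|t|) a * Ring.inverse (a + ((z : ℂ) * I) • 1))
        * (cfc (fun t : ℝ => √|t|) a * Ring.inverse (a + ((z : ℂ) * I) • 1))
      = cfc (fun t : ℝ => |t| / (t ^ 2 + z ^ 2)) a := by
  have hreal : ∀ x ∈ spectrum ℂ a, ∃ r : ℝ, r ≠ 0 ∧ x = r := fun x hx =>
    ⟨x.re, fun h => h0 (h ▸ spectrum.of_algebraMap_mem ℂ (ha.mem_spectrum_eq_re hx ▸ hx)),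
      ha.mem_spectrum_eq_re hx⟩
  have hres : ∀ x ∈ spectrum ℂ a, x + z * I ≠ 0 := by
    intro x hx h
    obtain ⟨r, hr, rfl⟩ := hreal x hx
    simpa [hr] using congrArg re h
  have hsqrt : ContinuousOn (fun x : ℂ => (√|x.re| : ℂ)) (spectrum ℂ a) := by fun_prop
  have hinv : ContinuousOn (fun x : ℂ => (x + z * I)⁻¹) (spectrum ℂ a) :=
    ContinuousOn.inv₀ (by fun_prop) hres
  have hprod : ContinuousOn (fun x : ℂ => (√|x.re| : ℂ) * (x + z * I)⁻¹) (spectrum ℂ a) :=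
    hsqrt.mul hinv
  rw [cfc_real_eq_complex, ← cfc_inv_add_const a _ hres, ← cfc_mul _ _ a hsqrt hinv,
    ← cfc_star, ← cfc_mul _ _ a hprod.star hprod, cfc_real_eq_complex]
  refine cfc_congr fun x hx => ?_
  obtain ⟨r, -, rfl⟩ := hreal x hx
  simpa using star_mul_self_sqrt_abs_mul_inv r z

end CStarAlgebra

/-- If `D` is self-adjoint with `0 ∉ σ(D)`, then for any vector `u`,
`∫_{-∞}^{∞} ‖ |D|^{1/2} (D + iz)⁻¹ u ‖² dz = π ‖u‖²`. -/
theorem integral_normSq_absRoot_resolvent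
    {H : Type*} [NormedAddCommGroup H] [InnerProductSpace ℂ H] [CompleteSpace H]
    (D : H →L[ℂ] H) (hD : IsSelfAdjoint D) (h0 : (0 : ℂ) ∉ spectrum ℂ D) (u : H) :
    ∫ z : ℝ,
        ‖(cfc (fun t : ℝ => Real.sqrt |t|) D)
          ((Ring.inverse (D + ((z : ℂ) * Complex.I) • 1)) u)‖ ^ 2
      = Real.pi * ‖u‖ ^ 2 := by
  have h0' : (0 : ℝ) ∉ spectrum ℝ D := fun h => h0 (by simpa using spectrum.algebraMap_mem ℂ h)
  set K : ℝ → H →L[ℂ] H := fun z => cfc (fun t : ℝ => |t| / (t ^ 2 + z ^ 2)) D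
  have hK : Integrable K := hD.integrable_cfc_abs_div_sq_add_sq h0'
  calc _ = ∫ z : ℝ, RCLike.re ⟪u, K z u⟫_ℂ := by
        congr 1 with z
        simp only [K, ← hD.star_mul_self_cfc_sqrt_abs_mul_inverse h0' z]
        exact ContinuousLinearMap.apply_norm_sq_eq_inner_adjoint_right (_ * _ : H →L[ℂ] H) u
    _ = RCLike.re ⟪u, (∫ z : ℝ, K z) u⟫_ℂ := by
        have hKu := hK.apply_continuousLinearMap u
        rw [integral_re (hKu.const_inner u), integral_inner hKu,
          ContinuousLinearMap.integral_apply hK]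
    _ = π * ‖u‖ ^ 2 := by
        simp [K, hD.integral_cfc_abs_div_sq_add_sq h0', inner_self_eq_norm_sq_to_K, ← ofReal_pow]
end

section
/- Let D₁ and D₂ be self-adjoint operators with common domain, 0 in neither spectrum, such that D₂ = D₁ + A with A bounded. Then the difference of positive spectral projections is given by 1_{(0,∞)}(D₂) − 1_{(0,∞)}(D₁) = −(1/2π) ∫_{−∞}^{∞} (D₁+iz)^{-1} A (D₂+iz)^{-1} dz, with the integral converging strongly. -/
open MeasureTheory Filter Topology

/-- The spectral projection `1_{(0,∞)}(D)` via continuous functional calculus. -/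
noncomputable def posSpectralProj {H : Type*} [NormedAddCommGroup H]
    [InnerProductSpace ℂ H] [CompleteSpace H] (D : H →L[ℂ] H) : H →L[ℂ] H :=
  cfc (fun t : ℝ => if 0 < t then (1 : ℝ) else 0) D

/-!
For self-adjoint invertible `a`, the resolvent `(a + iz)⁻¹` is `cfc (w ↦ (w + iz)⁻¹) a`, and
integrating under the functional calculus gives
`∫_{-R}^{R} (a + iz)⁻¹ dz = cfc (t ↦ 2 arctan (R/t)) a`. Since
`arctan (R/t) = π (1_{t>0} - 1/2) - arctan (t/R)` for `t ≠ 0`, the symmetric integral differs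
from `2π (1_{(0,∞)}(a) - 1/2)` by `cfc (t ↦ -2 arctan (t/R)) a`, whose norm is at most
`2 arctan (‖a‖/R) → 0`: the convergence even holds in operator norm. The second resolvent
identity `(a + iz)⁻¹ (b - a) (b + iz)⁻¹ = (a + iz)⁻¹ - (b + iz)⁻¹` reduces the formula for the
pair `D₁, D₂` to the difference of the two single-operator limits.
-/

open Complex

namespace Real

theorem arctan_div_eq_of_ne_zero {R t : ℝ} (hR : 0 < R) (ht : t ≠ 0) :
    arctan (R / t) = π * ((if 0 < t then 1 else 0) - 1 / 2) - arctan (t / R) := by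
  rw [← inv_div t R]
  rcases ht.lt_or_gt with ht | ht
  · rw [arctan_inv_of_neg (div_neg_of_neg_of_pos ht hR), if_neg ht.not_gt]; ring
  · rw [arctan_inv_of_pos (div_pos ht hR), if_pos ht]; ring

end Real

theorem integral_inv_ofReal_add_mul_I {t : ℝ} (ht : t ≠ 0) (R : ℝ) :
    ∫ z in (-R)..R, ((t : ℂ) + z * I)⁻¹ = ((2 * Real.arctan (R / t) : ℝ) : ℂ) := by
  have hsq : ∀ z : ℝ, t ^ 2 + z ^ 2 ≠ 0 := fun z => by positivity
  have hderiv (z : ℝ) : HasDerivAt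
      (fun z : ℝ => (Real.arctan (z / t) : ℂ) - I / 2 * (Real.log (t ^ 2 + z ^ 2) : ℂ))
      ((t : ℂ) + z * I)⁻¹ z := by
    have h₁ := ((hasDerivAt_id' z).div_const t).arctan
    have h₂ := ((hasDerivAt_pow 2 z).const_add (t ^ 2)).log (hsq z)
    refine (h₁.ofReal_comp.sub (h₂.ofReal_comp.const_mul (I / 2))).congr_deriv ?_
    have ht' : (t : ℂ) ≠ 0 := by exact_mod_cast ht
    have hsq' : (t : ℂ) ^ 2 + (z : ℂ) ^ 2 ≠ 0 := by exact_mod_cast hsq z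
    refine eq_inv_of_mul_eq_one_left ?_
    push_cast
    field_simp
    linear_combination -(z : ℂ) ^ 2 * I_sq
  have hcont : Continuous fun z : ℝ => ((t : ℂ) + z * I)⁻¹ :=
    Continuous.inv₀ (by fun_prop) fun z h => ht (by simpa using congrArg re h)
  rw [intervalIntegral.integral_eq_sub_of_hasDerivAt (fun z _ => hderiv z)
    (hcont.intervalIntegrable _ _)]
  simp only [neg_div, Real.arctan_neg, neg_sq]
  push_cast
  ring

theorem continuousOn_ite_pos_of_zero_notMem {s : Set ℝ} (hs : (0 : ℝ) ∉ s) :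
    ContinuousOn (fun t : ℝ => if 0 < t then (1 : ℝ) else 0) s :=
  continuousOn_const.if (fun t ht => by
    rw [show {t : ℝ | 0 < t} = Set.Ioi 0 from rfl, frontier_Ioi] at ht
    exact absurd (ht.2 ▸ ht.1) hs) continuousOn_const

theorem exists_pos_le_norm_of_mem_spectrum {𝕜 A : Type*} [NontriviallyNormedField 𝕜]
    [NormedRing A] [NormedAlgebra 𝕜 A] [CompleteSpace A] {a : A} (h0 : (0 : 𝕜) ∉ spectrum 𝕜 a) :
    ∃ δ > 0, ∀ w ∈ spectrum 𝕜 a, δ ≤ ‖w‖ := by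
  obtain ⟨δ, hδ, hball⟩ :=
    Metric.mem_nhds_iff.mp ((spectrum.isClosed a).isOpen_compl.mem_nhds h0)
  exact ⟨δ, hδ, fun w hw => not_lt.mp fun hlt => hball (by simpa using hlt) hw⟩

section CStarAlgebra

variable {A : Type*} [CStarAlgebra A] {a : A}

theorem norm_cfc_neg_arctan_div_le {R : ℝ} (hR : 0 < R) :
    ‖cfc (fun t : ℝ => -(Real.arctan (t / R) / Real.pi)) a‖ ≤
      Real.arctan (‖a‖ / R) / Real.pi := by
  nontriviality A
  refine norm_cfc_le (by have := Real.pi_pos; positivity) fun t ht => ?_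
  have hta : |t| ≤ ‖a‖ := by simpa using spectrum.norm_le_norm_of_mem ht
  rw [norm_neg, norm_div, Real.norm_eq_abs, Real.norm_eq_abs, abs_of_pos Real.pi_pos]
  gcongr
  rw [abs_le, ← Real.arctan_neg, Real.arctan_le_arctan_iff, Real.arctan_le_arctan_iff, ← neg_div]
  exact ⟨by gcongr; exact neg_le_of_abs_le hta, by gcongr; exact le_of_abs_le hta⟩

namespace IsSelfAdjoint

theorem re_ne_zero_of_mem_spectrum_s12 (ha : IsSelfAdjoint a) (h0 : (0 : ℂ) ∉ spectrum ℂ a)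
    {w : ℂ} (hw : w ∈ spectrum ℂ a) : w.re ≠ 0 := fun h =>
  h0 (by rwa [ha.mem_spectrum_eq_re hw, h, ofReal_zero] at hw)

theorem add_mul_I_ne_zero_of_mem_spectrum (ha : IsSelfAdjoint a)
    (h0 : (0 : ℂ) ∉ spectrum ℂ a) {w : ℂ} (hw : w ∈ spectrum ℂ a) (z : ℝ) :
    w + z * I ≠ 0 := fun h =>
  ha.re_ne_zero_of_mem_spectrum_s12 h0 hw (by simpa using congrArg re h)

theorem cfc_add_mul_I (ha : IsSelfAdjoint a) (z : ℝ) :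
    cfc (fun w : ℂ => w + z * I) a = a + ((z : ℂ) * I) • 1 := by
  rw [cfc_add_const .., cfc_id' ℂ a, Algebra.algebraMap_eq_smul_one]

theorem isUnit_add_mul_I_smul_one (ha : IsSelfAdjoint a) (h0 : (0 : ℂ) ∉ spectrum ℂ a)
    (z : ℝ) : IsUnit (a + ((z : ℂ) * I) • 1) := by
  rw [← ha.cfc_add_mul_I]
  exact (isUnit_cfc_iff _ _).mpr fun w hw => ha.add_mul_I_ne_zero_of_mem_spectrum h0 hw z

theorem ringInverse_add_mul_I_smul_one (ha : IsSelfAdjoint a) (h0 : (0 : ℂ) ∉ spectrum ℂ a)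
    (z : ℝ) : Ring.inverse (a + ((z : ℂ) * I) • 1) = cfc (fun w : ℂ => (w + z * I)⁻¹) a := by
  rw [cfc_inv _ _ fun w hw => ha.add_mul_I_ne_zero_of_mem_spectrum h0 hw z, ha.cfc_add_mul_I]

theorem continuous_ringInverse_add_mul_I_smul_one (ha : IsSelfAdjoint a)
    (h0 : (0 : ℂ) ∉ spectrum ℂ a) :
    Continuous fun z : ℝ => Ring.inverse (a + ((z : ℂ) * I) • 1) :=
  continuous_iff_continuousAt.mpr fun z =>
    (NormedRing.inverse_continuousAt (ha.isUnit_add_mul_I_smul_one h0 z).unit).comp_of_eq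
      (by fun_prop) (IsUnit.unit_spec _).symm

theorem intervalIntegral_ringInverse_add_mul_I_smul_one (ha : IsSelfAdjoint a)
    (h0 : (0 : ℂ) ∉ spectrum ℂ a) {R : ℝ} (hR : 0 ≤ R) :
    ∫ z in (-R)..R, Ring.inverse (a + ((z : ℂ) * I) • 1) =
      cfc (fun t : ℝ => 2 * Real.arctan (R / t)) a := by
  obtain ⟨δ, hδ, hδa⟩ := exists_pos_le_norm_of_mem_spectrum h0
  have hbound (z : ℝ) (w : ℂ) (hw : w ∈ spectrum ℂ a) : ‖(w + z * I)⁻¹‖ ≤ δ⁻¹ := by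
    obtain ⟨t, rfl⟩ : ∃ t : ℝ, w = t := ⟨w.re, ha.mem_spectrum_eq_re hw⟩
    rw [norm_inv]
    refine inv_anti₀ hδ ((hδa _ hw).trans ?_)
    simpa using abs_re_le_norm ((t : ℂ) + z * I)
  have hcont : ContinuousOn (Function.uncurry fun (z : ℝ) (w : ℂ) => (w + z * I)⁻¹)
      (Set.Ioc (-R) R ×ˢ spectrum ℂ a) :=
    ContinuousOn.inv₀ (by fun_prop) fun p hp => ha.add_mul_I_ne_zero_of_mem_spectrum h0 hp.2 p.1
  rw [intervalIntegral.integral_of_le (by linarith), cfc_real_eq_complex _ ha]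
  simp_rw [ha.ringInverse_add_mul_I_smul_one h0]
  rw [← cfc_setIntegral measurableSet_Ioc _ (fun _ => δ⁻¹) a hcont
    (.of_forall fun z w hw => hbound z w hw) (hasFiniteIntegral_const _)]
  refine cfc_congr fun w hw => ?_
  obtain ⟨t, rfl⟩ : ∃ t : ℝ, w = t := ⟨w.re, ha.mem_spectrum_eq_re hw⟩
  rw [← intervalIntegral.integral_of_le (by linarith), ofReal_re,
    integral_inv_ofReal_add_mul_I (by simpa using ha.re_ne_zero_of_mem_spectrum_s12 h0 hw)]

theorem smul_intervalIntegral_ringInverse_sub_eq_cfc (ha : IsSelfAdjoint a)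
    (h0 : (0 : ℂ) ∉ spectrum ℂ a) {R : ℝ} (hR : 0 < R) :
    (1 / (2 * Real.pi) : ℂ) • (∫ z in (-R)..R, Ring.inverse (a + ((z : ℂ) * I) • 1)) -
        (cfc (fun t : ℝ => if 0 < t then (1 : ℝ) else 0) a - (1 / 2 : ℂ) • 1) =
      cfc (fun t : ℝ => -(Real.arctan (t / R) / Real.pi)) a := by
  have h0ℝ : (0 : ℝ) ∉ spectrum ℝ a :=
    spectrum.zero_notMem_iff ℝ |>.mpr (spectrum.zero_notMem_iff ℂ |>.mp h0)
  have hind := continuousOn_ite_pos_of_zero_notMem h0ℝ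
  calc _ = cfc (fun t : ℝ => 1 / (2 * Real.pi) * (2 * Real.arctan (R / t)) -
        ((if 0 < t then 1 else 0) - 1 / 2)) a := by
        rw [ha.intervalIntegral_ringInverse_add_mul_I_smul_one h0 hR.le, cfc_sub .., cfc_sub ..,
          cfc_const_mul (1 / (2 * Real.pi)) .., cfc_const (1 / 2 : ℝ) a,
          Algebra.algebraMap_eq_smul_one, ← Complex.coe_smul, ← Complex.coe_smul]
        norm_num
    _ = _ := cfc_congr fun t ht => by
        rw [Real.arctan_div_eq_of_ne_zero hR (ne_of_mem_of_not_mem ht h0ℝ)]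
        field_simp
        ring

theorem tendsto_smul_intervalIntegral_ringInverse_add_mul_I_smul_one (ha : IsSelfAdjoint a)
    (h0 : (0 : ℂ) ∉ spectrum ℂ a) :
    Tendsto (fun R : ℝ => (1 / (2 * Real.pi) : ℂ) •
        ∫ z in (-R)..R, Ring.inverse (a + ((z : ℂ) * I) • 1))
      atTop (𝓝 (cfc (fun t : ℝ => if 0 < t then (1 : ℝ) else 0) a - (1 / 2 : ℂ) • 1)) := by
  have hbound : Tendsto (fun R : ℝ => Real.arctan (‖a‖ / R) / Real.pi) atTop (𝓝 0) := by
    simpa using ((Real.continuous_arctan.tendsto 0).comp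
      (tendsto_const_nhds.div_atTop tendsto_id)).div_const Real.pi
  rw [tendsto_iff_norm_sub_tendsto_zero]
  refine squeeze_zero' (.of_forall fun _ => norm_nonneg _) ?_ hbound
  filter_upwards [eventually_gt_atTop 0] with R hR
  rw [ha.smul_intervalIntegral_ringInverse_sub_eq_cfc h0 hR]
  exact norm_cfc_neg_arctan_div_le hR

theorem tendsto_smul_intervalIntegral_ringInverse_mul_sub_mul_ringInverse {b : A}
    (ha : IsSelfAdjoint a) (hb : IsSelfAdjoint b)
    (ha0 : (0 : ℂ) ∉ spectrum ℂ a) (hb0 : (0 : ℂ) ∉ spectrum ℂ b) :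
    Tendsto (fun R : ℝ => (-(1 / (2 * Real.pi)) : ℂ) •
        ∫ z in (-R)..R, Ring.inverse (a + ((z : ℂ) * I) • 1) * (b - a) *
          Ring.inverse (b + ((z : ℂ) * I) • 1))
      atTop (𝓝 (cfc (fun t : ℝ => if 0 < t then (1 : ℝ) else 0) b -
        cfc (fun t : ℝ => if 0 < t then (1 : ℝ) else 0) a)) := by
  have hres (z : ℝ) : Ring.inverse (a + ((z : ℂ) * I) • 1) * (b - a) *
      Ring.inverse (b + ((z : ℂ) * I) • 1) =
      Ring.inverse (a + ((z : ℂ) * I) • 1) - Ring.inverse (b + ((z : ℂ) * I) • 1) := by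
    rw [Ring.inverse_sub_inverse (iff_of_true (ha.isUnit_add_mul_I_smul_one ha0 z)
      (hb.isUnit_add_mul_I_smul_one hb0 z)), add_sub_add_right_eq_sub]
  simp_rw [hres]
  convert ((ha.tendsto_smul_intervalIntegral_ringInverse_add_mul_I_smul_one ha0).sub
    (hb.tendsto_smul_intervalIntegral_ringInverse_add_mul_I_smul_one hb0)).neg using 2 with R
  · rw [intervalIntegral.integral_sub
      ((ha.continuous_ringInverse_add_mul_I_smul_one ha0).intervalIntegrable _ _)
      ((hb.continuous_ringInverse_add_mul_I_smul_one hb0).intervalIntegrable _ _),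
      neg_smul, smul_sub]
  · abel

end IsSelfAdjoint

end CStarAlgebra

/-- Resolvent formula for the difference of positive spectral projections:
if `D₁, D₂` are self-adjoint with `0` in neither spectrum and `D₂ = D₁ + A`
with `A` bounded, then
`1_{(0,∞)}(D₂) − 1_{(0,∞)}(D₁) = −(1/2π)∫ (D₁+iz)⁻¹ A (D₂+iz)⁻¹ dz`,
with the integral converging strongly (as a symmetric principal value). -/
theorem spectral_projection_difference_resolvent_formula
    {H : Type*} [NormedAddCommGroup H] [InnerProductSpace ℂ H] [CompleteSpace H]
    (D₁ D₂ A : H →L[ℂ] H) (hD₁ : IsSelfAdjoint D₁) (hD₂ : IsSelfAdjoint D₂)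
    (h₁ : (0 : ℂ) ∉ spectrum ℂ D₁) (h₂ : (0 : ℂ) ∉ spectrum ℂ D₂)
    (hA : D₂ = D₁ + A) (u : H) :
    Tendsto
      (fun R : ℝ => (-(1 / (2 * Real.pi)) : ℂ) •
        ∫ z in (-R)..R,
          (Ring.inverse (D₁ + ((z : ℂ) * Complex.I) • 1))
            (A ((Ring.inverse (D₂ + ((z : ℂ) * Complex.I) • 1)) u)))
      atTop
      (𝓝 ((posSpectralProj D₂) u - (posSpectralProj D₁) u)) := by
  have hop := hD₁.tendsto_smul_intervalIntegral_ringInverse_mul_sub_mul_ringInverse hD₂ h₁ h₂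
  rw [show D₂ - D₁ = A by rw [hA, add_sub_cancel_left]] at hop
  refine (((ContinuousLinearMap.apply ℂ H u).continuous.tendsto _).comp hop).congr fun R => ?_
  have hint : IntervalIntegrable (fun z : ℝ => Ring.inverse (D₁ + ((z : ℂ) * I) • 1) * A *
      Ring.inverse (D₂ + ((z : ℂ) * I) • 1)) volume (-R) R :=
    (((hD₁.continuous_ringInverse_add_mul_I_smul_one h₁).mul continuous_const).mul
      (hD₂.continuous_ringInverse_add_mul_I_smul_one h₂)).intervalIntegrable _ _
  rw [Function.comp_apply, ContinuousLinearMap.apply_apply, smul_apply,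
    ContinuousLinearMap.intervalIntegral_apply hint]
  rfl
end
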